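/- arXiv:1206.0459 — 4 statements merged into one kernel-verified Lean document; each statement's English description precedes it below -/
import Mathlib

section
/- Let Λ: ℝ → (0,∞) be such that log Λ is L-Lipschitz. For measurable bounded functions v, w on a probability space (M, μ) define the normalized densities f_v = Λ(v)/∫Λ(v)dμ and f_w = Λ(w)/∫Λ(w)dμ. Then the Hellinger distance satisfies h²(f_v, f_w) ≤ L‖v−w‖_∞ e^{L‖v−w‖_∞/2}. -/
open MeasureTheory

/-- Hellinger bound: `h²(f_v, f_w) ≤ L‖v−w‖_∞ e^{L‖v−w‖_∞/2}` for the normalized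
densities `f_v = Λ(v)/∫Λ(v)dμ`, `f_w = Λ(w)/∫Λ(w)dμ`, where `log Λ` is L-Lipschitz. -/
theorem hellinger_sq_bound {M : Type*} [MeasurableSpace M] [Nonempty M]
    (μ : Measure M) [IsProbabilityMeasure μ]
    (Λ : ℝ → ℝ) (hΛpos : ∀ x, 0 < Λ x) (L : ℝ) (hL : 0 ≤ L)
    (hLip : ∀ a b : ℝ, |Real.log (Λ a) - Real.log (Λ b)| ≤ L * |a - b|)
    (v w : M → ℝ) (hv : Measurable v) (hw : Measurable w)
    (hvb : BddAbove (Set.range fun x => |v x - w x|))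
    (hvint : Integrable (fun x => Λ (v x)) μ)
    (hwint : Integrable (fun x => Λ (w x)) μ) :
    ∫ x, (Real.sqrt (Λ (v x) / ∫ y, Λ (v y) ∂μ) -
          Real.sqrt (Λ (w x) / ∫ y, Λ (w y) ∂μ)) ^ 2 ∂μ ≤
      L * (⨆ x, |v x - w x|) *
        Real.exp (L * (⨆ x, |v x - w x|) / 2) := by
  obtain ⟨x₀⟩ := ‹Nonempty M›
  set δ := ⨆ x, |v x - w x| with hδdef
  have hδ0 : 0 ≤ δ := le_trans (abs_nonneg _) (le_ciSup hvb x₀)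
  have hbound : ∀ x, |v x - w x| ≤ δ := fun x => le_ciSup hvb x
  set t := L * δ with htdef
  have ht0 : 0 ≤ t := mul_nonneg hL hδ0
  -- pointwise exponential comparison
  have key : ∀ a b : ℝ, |a - b| ≤ δ → Λ b * Real.exp (-t) ≤ Λ a := by
    intro a b hab
    have h1 : Real.log (Λ b) - Real.log (Λ a) ≤ t := by
      calc Real.log (Λ b) - Real.log (Λ a)
          ≤ |Real.log (Λ a) - Real.log (Λ b)| := by
            rw [abs_sub_comm]; exact le_abs_self _
        _ ≤ L * |a - b| := hLip a b
        _ ≤ L * δ := mul_le_mul_of_nonneg_left hab hL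
    have h2 : Real.log (Λ b) + (-t) ≤ Real.log (Λ a) := by linarith
    calc Λ b * Real.exp (-t) = Real.exp (Real.log (Λ b) + (-t)) := by
          rw [Real.exp_add, Real.exp_log (hΛpos b)]
      _ ≤ Real.exp (Real.log (Λ a)) := Real.exp_le_exp.2 h2
      _ = Λ a := Real.exp_log (hΛpos a)
  set Iv := ∫ y, Λ (v y) ∂μ with hIvdef
  set Iw := ∫ y, Λ (w y) ∂μ with hIwdef
  have hIvpos : 0 < Iv := by
    rw [hIvdef]
    refine (integral_pos_iff_support_of_nonneg (fun x => (hΛpos (v x)).le) hvint).2 ?_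
    have hsup : (Function.support fun x => Λ (v x)) = Set.univ := by
      ext x; simp [Function.mem_support, (hΛpos (v x)).ne']
    rw [hsup]; simp
  have hIwpos : 0 < Iw := by
    rw [hIwdef]
    refine (integral_pos_iff_support_of_nonneg (fun x => (hΛpos (w x)).le) hwint).2 ?_
    have hsup : (Function.support fun x => Λ (w x)) = Set.univ := by
      ext x; simp [Function.mem_support, (hΛpos (w x)).ne']
    rw [hsup]; simp
  -- the geometric-mean function
  set g : M → ℝ := fun x => Real.sqrt (Λ (v x)) * Real.sqrt (Λ (w x)) with hgdef
  have hg_meas : AEStronglyMeasurable g μ :=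
    (Real.continuous_sqrt.comp_aestronglyMeasurable hvint.1).mul
      (Real.continuous_sqrt.comp_aestronglyMeasurable hwint.1)
  have hg_nonneg : ∀ x, 0 ≤ g x := fun x =>
    mul_nonneg (Real.sqrt_nonneg _) (Real.sqrt_nonneg _)
  have hg_le : ∀ x, g x ≤ (Λ (v x) + Λ (w x)) / 2 := by
    intro x
    have h1 := Real.sq_sqrt (hΛpos (v x)).le
    have h2 := Real.sq_sqrt (hΛpos (w x)).le
    simp only [hgdef]
    nlinarith [sq_nonneg (Real.sqrt (Λ (v x)) - Real.sqrt (Λ (w x)))]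
  have hg_int : Integrable g μ := by
    refine Integrable.mono' ((hvint.add hwint).div_const 2) hg_meas ?_
    filter_upwards with x
    rw [Real.norm_eq_abs, abs_of_nonneg (hg_nonneg x)]
    exact hg_le x
  have hexp_half : Real.sqrt (Real.exp (-t)) = Real.exp (-t / 2) := by
    rw [show Real.exp (-t) = Real.exp (-t / 2) * Real.exp (-t / 2) by
        rw [← Real.exp_add]; ring_nf,
      Real.sqrt_mul_self (Real.exp_pos _).le]
  -- pointwise lower bounds
  have hg_ge_w : ∀ x, Real.exp (-t / 2) * Λ (w x) ≤ g x := by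
    intro x
    have h := key (v x) (w x) (hbound x)
    have h2 : Real.sqrt (Λ (w x) * Real.exp (-t)) ≤ Real.sqrt (Λ (v x)) :=
      Real.sqrt_le_sqrt h
    rw [Real.sqrt_mul (hΛpos (w x)).le, hexp_half] at h2
    have h3 := Real.sq_sqrt (hΛpos (w x)).le
    simp only [hgdef]
    calc Real.exp (-t / 2) * Λ (w x)
        = (Real.sqrt (Λ (w x)) * Real.exp (-t / 2)) * Real.sqrt (Λ (w x)) := by
          conv_lhs => rw [← h3]
          ring
      _ ≤ Real.sqrt (Λ (v x)) * Real.sqrt (Λ (w x)) :=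
          mul_le_mul_of_nonneg_right h2 (Real.sqrt_nonneg _)
  have hg_ge_v : ∀ x, Real.exp (-t / 2) * Λ (v x) ≤ g x := by
    intro x
    have h := key (w x) (v x) (by rw [abs_sub_comm]; exact hbound x)
    have h2 : Real.sqrt (Λ (v x) * Real.exp (-t)) ≤ Real.sqrt (Λ (w x)) :=
      Real.sqrt_le_sqrt h
    rw [Real.sqrt_mul (hΛpos (v x)).le, hexp_half] at h2
    have h3 := Real.sq_sqrt (hΛpos (v x)).le
    simp only [hgdef]
    calc Real.exp (-t / 2) * Λ (v x)
        = (Real.sqrt (Λ (v x)) * Real.exp (-t / 2)) * Real.sqrt (Λ (v x)) := by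
          conv_lhs => rw [← h3]
          ring
      _ ≤ Real.sqrt (Λ (w x)) * Real.sqrt (Λ (v x)) :=
          mul_le_mul_of_nonneg_right h2 (Real.sqrt_nonneg _)
      _ = Real.sqrt (Λ (v x)) * Real.sqrt (Λ (w x)) := by ring
  have hIg_w : Real.exp (-t / 2) * Iw ≤ ∫ x, g x ∂μ := by
    rw [hIwdef, ← integral_const_mul]
    exact integral_mono (hwint.const_mul _) hg_int hg_ge_w
  have hIg_v : Real.exp (-t / 2) * Iv ≤ ∫ x, g x ∂μ := by
    rw [hIvdef, ← integral_const_mul]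
    exact integral_mono (hvint.const_mul _) hg_int hg_ge_v
  -- geometric mean of the integrals
  have hsqrt_prod : Real.sqrt Iv * Real.sqrt Iw ≤ max Iv Iw := by
    rw [← Real.sqrt_mul hIvpos.le]
    have : Iv * Iw ≤ (max Iv Iw) ^ 2 := by
      rcases le_total Iv Iw with h | h
      · rw [max_eq_right h]; nlinarith
      · rw [max_eq_left h]; nlinarith
    calc Real.sqrt (Iv * Iw) ≤ Real.sqrt ((max Iv Iw) ^ 2) := Real.sqrt_le_sqrt this
      _ = max Iv Iw := Real.sqrt_sq (le_max_of_le_left hIvpos.le)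
  have hIg : Real.exp (-t / 2) * (Real.sqrt Iv * Real.sqrt Iw) ≤ ∫ x, g x ∂μ := by
    rcases le_total Iv Iw with h | h
    · calc Real.exp (-t / 2) * (Real.sqrt Iv * Real.sqrt Iw)
          ≤ Real.exp (-t / 2) * Iw := by
            have := hsqrt_prod; rw [max_eq_right h] at this
            exact mul_le_mul_of_nonneg_left this (Real.exp_pos _).le
        _ ≤ _ := hIg_w
    · calc Real.exp (-t / 2) * (Real.sqrt Iv * Real.sqrt Iw)
          ≤ Real.exp (-t / 2) * Iv := by
            have := hsqrt_prod; rw [max_eq_left h] at this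
            exact mul_le_mul_of_nonneg_left this (Real.exp_pos _).le
        _ ≤ _ := hIg_v
  -- expand the square
  have hexpand : ∀ x, (Real.sqrt (Λ (v x) / Iv) - Real.sqrt (Λ (w x) / Iw)) ^ 2
      = Λ (v x) / Iv + Λ (w x) / Iw
        - 2 * ((Real.sqrt Iv * Real.sqrt Iw)⁻¹ * g x) := by
    intro x
    have hIv2 := Real.sq_sqrt hIvpos.le
    have hIw2 := Real.sq_sqrt hIwpos.le
    have h1 : Real.sqrt (Λ (v x) / Iv) = Real.sqrt (Λ (v x)) / Real.sqrt Iv :=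
      Real.sqrt_div (hΛpos (v x)).le Iv
    have h2 : Real.sqrt (Λ (w x) / Iw) = Real.sqrt (Λ (w x)) / Real.sqrt Iw :=
      Real.sqrt_div (hΛpos (w x)).le Iw
    have hsv := Real.sq_sqrt (hΛpos (v x)).le
    have hsw := Real.sq_sqrt (hΛpos (w x)).le
    have hIvs : Real.sqrt Iv ≠ 0 := by positivity
    have hIws : Real.sqrt Iw ≠ 0 := by positivity
    rw [h1, h2]
    simp only [hgdef]
    rw [sub_sq, div_pow, div_pow, hsv, hsw, hIv2, hIw2]
    field_simp
    ring
  have hint_main : ∫ x, (Real.sqrt (Λ (v x) / Iv) - Real.sqrt (Λ (w x) / Iw)) ^ 2 ∂μ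
      = Iv / Iv + Iw / Iw - 2 * ((Real.sqrt Iv * Real.sqrt Iw)⁻¹ * ∫ x, g x ∂μ) := by
    rw [show (fun x => (Real.sqrt (Λ (v x) / Iv) - Real.sqrt (Λ (w x) / Iw)) ^ 2)
        = fun x => Λ (v x) / Iv + Λ (w x) / Iw
          - 2 * ((Real.sqrt Iv * Real.sqrt Iw)⁻¹ * g x) from funext hexpand]
    have hint1 : Integrable (fun x => Λ (v x) / Iv + Λ (w x) / Iw) μ :=
      (hvint.div_const Iv).add (hwint.div_const Iw)
    have hint2 : Integrable (fun x => 2 * ((Real.sqrt Iv * Real.sqrt Iw)⁻¹ * g x)) μ :=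
      (hg_int.const_mul _).const_mul 2
    rw [integral_sub hint1 hint2,
      integral_add (hvint.div_const Iv) (hwint.div_const Iw),
      integral_const_mul, integral_const_mul, integral_div, integral_div]
  rw [hint_main, div_self hIvpos.ne', div_self hIwpos.ne']
  have hsqrt_pos : 0 < Real.sqrt Iv * Real.sqrt Iw := by positivity
  have hfin : Real.exp (-t / 2) ≤ (Real.sqrt Iv * Real.sqrt Iw)⁻¹ * ∫ x, g x ∂μ := by
    rw [inv_mul_eq_div, le_div_iff₀ hsqrt_pos]
    exact hIg
  have h1 : -t / 2 + 1 ≤ Real.exp (-t / 2) := Real.add_one_le_exp _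
  have h2 : (1:ℝ) ≤ Real.exp (t / 2) := Real.one_le_exp (by linarith)
  nlinarith [hfin]
end

section
/- Let Λ: ℝ → (0,∞) with log Λ being L-Lipschitz, and let v, w be bounded measurable functions on a probability space (M, μ). With f_v = Λ(v)/∫Λ(v)dμ and f_w = Λ(w)/∫Λ(w)dμ, it holds that ‖log(f_v/f_w)‖_∞ ≤ 2L‖v−w‖_∞. -/
open MeasureTheory

/-- `‖log(f_v/f_w)‖_∞ ≤ 2L‖v−w‖_∞` for the normalized densities
`f_v = Λ(v)/∫Λ(v)dμ`, `f_w = Λ(w)/∫Λ(w)dμ`, where `log Λ` is L-Lipschitz. -/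
theorem log_ratio_density_bound {M : Type*} [MeasurableSpace M] [Nonempty M]
    (μ : Measure M) [IsProbabilityMeasure μ]
    (Λ : ℝ → ℝ) (hΛpos : ∀ x, 0 < Λ x) (L : ℝ) (hL : 0 ≤ L)
    (hLip : ∀ a b : ℝ, |Real.log (Λ a) - Real.log (Λ b)| ≤ L * |a - b|)
    (v w : M → ℝ) (hv : Measurable v) (hw : Measurable w)
    (hvb : BddAbove (Set.range fun x => |v x - w x|))
    (hvint : Integrable (fun x => Λ (v x)) μ)
    (hwint : Integrable (fun x => Λ (w x)) μ) :
    ∀ x, |Real.log ((Λ (v x) / ∫ y, Λ (v y) ∂μ) /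
                    (Λ (w x) / ∫ y, Λ (w y) ∂μ))| ≤
      2 * L * (⨆ x', |v x' - w x'|) := by
  intro x
  set S : ℝ := ⨆ x', |v x' - w x'| with hSdef
  have hS : ∀ y, |v y - w y| ≤ S := fun y => le_ciSup hvb y
  have hS0 : 0 ≤ S := le_trans (abs_nonneg _) (hS Classical.ofNonempty)
  have h1 : ∀ y, |Real.log (Λ (v y)) - Real.log (Λ (w y))| ≤ L * S :=
    fun y => (hLip _ _).trans (mul_le_mul_of_nonneg_left (hS y) hL)
  -- pointwise exponential bounds
  have hvw : ∀ y, Λ (v y) ≤ Real.exp (L * S) * Λ (w y) := by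
    intro y
    have := (abs_le.1 (h1 y)).2
    have h2 : Real.log (Λ (v y)) ≤ Real.log (Λ (w y)) + L * S := by linarith
    calc Λ (v y) = Real.exp (Real.log (Λ (v y))) := (Real.exp_log (hΛpos _)).symm
      _ ≤ Real.exp (Real.log (Λ (w y)) + L * S) := Real.exp_le_exp.2 h2
      _ = Real.exp (L * S) * Λ (w y) := by
          rw [Real.exp_add, Real.exp_log (hΛpos _)]; ring
  have hwv : ∀ y, Λ (w y) ≤ Real.exp (L * S) * Λ (v y) := by
    intro y
    have := (abs_le.1 (h1 y)).1
    have h2 : Real.log (Λ (w y)) ≤ Real.log (Λ (v y)) + L * S := by linarith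
    calc Λ (w y) = Real.exp (Real.log (Λ (w y))) := (Real.exp_log (hΛpos _)).symm
      _ ≤ Real.exp (Real.log (Λ (v y)) + L * S) := Real.exp_le_exp.2 h2
      _ = Real.exp (L * S) * Λ (v y) := by
          rw [Real.exp_add, Real.exp_log (hΛpos _)]; ring
  -- positivity of the integrals
  have hIvpos : 0 < ∫ y, Λ (v y) ∂μ := by
    rw [integral_pos_iff_support_of_nonneg_ae
      (Filter.Eventually.of_forall fun y => (hΛpos _).le) hvint]
    have : Function.support (fun y => Λ (v y)) = Set.univ :=
      Set.eq_univ_of_forall fun y => (hΛpos _).ne'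
    simp [this]
  have hIwpos : 0 < ∫ y, Λ (w y) ∂μ := by
    rw [integral_pos_iff_support_of_nonneg_ae
      (Filter.Eventually.of_forall fun y => (hΛpos _).le) hwint]
    have : Function.support (fun y => Λ (w y)) = Set.univ :=
      Set.eq_univ_of_forall fun y => (hΛpos _).ne'
    simp [this]
  -- integral comparison
  have hIv : ∫ y, Λ (v y) ∂μ ≤ Real.exp (L * S) * ∫ y, Λ (w y) ∂μ := by
    rw [← integral_const_mul]
    exact integral_mono hvint (hwint.const_mul _) hvw
  have hIw : ∫ y, Λ (w y) ∂μ ≤ Real.exp (L * S) * ∫ y, Λ (v y) ∂μ := by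
    rw [← integral_const_mul]
    exact integral_mono hwint (hvint.const_mul _) hwv
  have h3 : |Real.log (∫ y, Λ (v y) ∂μ) - Real.log (∫ y, Λ (w y) ∂μ)| ≤ L * S := by
    rw [abs_le]
    constructor
    · have := Real.log_le_log hIwpos hIw
      rw [Real.log_mul (Real.exp_pos _).ne' hIvpos.ne', Real.log_exp] at this
      linarith
    · have := Real.log_le_log hIvpos hIv
      rw [Real.log_mul (Real.exp_pos _).ne' hIwpos.ne', Real.log_exp] at this
      linarith
  -- assemble
  have hrw : Real.log ((Λ (v x) / ∫ y, Λ (v y) ∂μ) / (Λ (w x) / ∫ y, Λ (w y) ∂μ)) =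
      (Real.log (Λ (v x)) - Real.log (Λ (w x))) -
      (Real.log (∫ y, Λ (v y) ∂μ) - Real.log (∫ y, Λ (w y) ∂μ)) := by
    rw [Real.log_div (div_pos (hΛpos _) hIvpos).ne' (div_pos (hΛpos _) hIwpos).ne',
      Real.log_div (hΛpos _).ne' hIvpos.ne', Real.log_div (hΛpos _).ne' hIwpos.ne']
    ring
  rw [hrw]
  calc _ ≤ |Real.log (Λ (v x)) - Real.log (Λ (w x))| +
        |Real.log (∫ y, Λ (v y) ∂μ) - Real.log (∫ y, Λ (w y) ∂μ)| := abs_sub _ _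
    _ ≤ L * S + L * S := add_le_add (h1 x) h3
    _ = 2 * L * S := by ring
end

section
/- For all real a and all X > 0 with X ≥ 2(a−1), it holds that ∫_X^∞ t^{a−1} e^{−t} dt ≤ 2 e^{−X} X^{a−1}. -/
open MeasureTheory

/-!
For `t ≥ X` write `t ^ b = X ^ b * (t / X) ^ b`. When `b ≤ c * X` with `0 ≤ c`, the inequality
`log y ≤ y - 1` gives `(t / X) ^ b ≤ exp (c * (t - X))`, so on `(X, ∞)` the integrand is dominated
by `X ^ b * e ^ (-X) * e ^ (-(1 - c) * (t - X))`, whose integral is `X ^ b * e ^ (-X) / (1 - c)`.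
The theorem is the case `b = a - 1`, `c = 1 / 2`.
-/

namespace Real

theorem rpow_le_exp_mul_sub_one {x b : ℝ} (hx : 0 < x) (hb : 0 ≤ b) :
    x ^ b ≤ exp (b * (x - 1)) :=
  calc x ^ b ≤ exp (x - 1) ^ b := rpow_le_rpow hx.le (by linarith [add_one_le_exp (x - 1)]) hb
    _ = exp (b * (x - 1)) := by rw [← exp_mul, mul_comm]

theorem div_rpow_le_exp_mul_sub {X t b c : ℝ} (hX : 0 < X) (hXt : X ≤ t) (hc : 0 ≤ c)
    (hb : b ≤ c * X) : (t / X) ^ b ≤ exp (c * (t - X)) := by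
  have hone : 1 ≤ t / X := (one_le_div hX).mpr hXt
  rcases le_or_gt b 0 with hb0 | hb0
  · calc (t / X) ^ b ≤ 1 := rpow_le_one_of_one_le_of_nonpos hone hb0
      _ ≤ exp (c * (t - X)) := one_le_exp (mul_nonneg hc (sub_nonneg.mpr hXt))
  · calc (t / X) ^ b ≤ exp (b * (t / X - 1)) := rpow_le_exp_mul_sub_one (by linarith) hb0.le
      _ = exp (b / X * (t - X)) := by congr 1; field_simp
      _ ≤ exp (c * (t - X)) :=
        exp_le_exp.mpr (mul_le_mul_of_nonneg_right ((div_le_iff₀ hX).mpr hb) (by linarith))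

theorem rpow_mul_exp_neg_le {X t b c : ℝ} (hX : 0 < X) (hXt : X ≤ t) (hc : 0 ≤ c)
    (hb : b ≤ c * X) : t ^ b * exp (-t) ≤ X ^ b * exp (-(c * X)) * exp ((c - 1) * t) :=
  calc t ^ b * exp (-t) = X ^ b * (t / X) ^ b * exp (-t) := by
        rw [div_rpow (by linarith) hX.le, mul_div_cancel₀ _ (rpow_pos_of_pos hX b).ne']
    _ ≤ X ^ b * exp (c * (t - X)) * exp (-t) := by
        gcongr
        exact div_rpow_le_exp_mul_sub hX hXt hc hb
    _ = X ^ b * exp (-(c * X)) * exp ((c - 1) * t) := by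
        rw [mul_assoc, mul_assoc, ← exp_add, ← exp_add]
        ring_nf

theorem integral_rpow_mul_exp_neg_Ioi_le {X b c : ℝ} (hX : 0 < X) (hc₀ : 0 ≤ c) (hc₁ : c < 1)
    (hb : b ≤ c * X) : ∫ t in Set.Ioi X, t ^ b * exp (-t) ≤ X ^ b * exp (-X) / (1 - c) := by
  have hc : c - 1 < 0 := by linarith
  calc ∫ t in Set.Ioi X, t ^ b * exp (-t)
      ≤ ∫ t in Set.Ioi X, X ^ b * exp (-(c * X)) * exp ((c - 1) * t) := by
        refine integral_mono_of_nonneg ?_ ((integrableOn_exp_mul_Ioi hc X).const_mul _) ?_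
        all_goals filter_upwards [ae_restrict_mem measurableSet_Ioi] with t (ht : X < t)
        · exact mul_nonneg (rpow_nonneg (by linarith) b) (exp_pos _).le
        · exact rpow_mul_exp_neg_le hX ht.le hc₀ hb
    _ = X ^ b * exp (-X) / (1 - c) := by
        rw [integral_const_mul, integral_exp_mul_Ioi hc, mul_div_assoc', mul_assoc, mul_neg,
          ← exp_add, show -(c * X) + (c - 1) * X = -X by ring, mul_neg, neg_div, ← div_neg, neg_sub]

end Real

/-- Incomplete Gamma tail bound: for all `a : ℝ` and `X > 0` with `X ≥ 2(a−1)`,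
`∫_X^∞ t^{a−1} e^{−t} dt ≤ 2 e^{−X} X^{a−1}`. -/
theorem incomplete_gamma_tail_bound (a X : ℝ) (hX : 0 < X) (hXa : 2 * (a - 1) ≤ X) :
    ∫ t in Set.Ioi X, t ^ (a - 1) * Real.exp (-t) ≤
      2 * Real.exp (-X) * X ^ (a - 1) :=
  calc ∫ t in Set.Ioi X, t ^ (a - 1) * Real.exp (-t)
      ≤ X ^ (a - 1) * Real.exp (-X) / (1 - 1 / 2) :=
        Real.integral_rpow_mul_exp_neg_Ioi_le hX (by norm_num) (by norm_num) (by linarith)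
    _ = 2 * Real.exp (-X) * X ^ (a - 1) := by ring
end

section
/- Let φ be the standard Gaussian quantile inverse G^{−1}. For all u ∈ (0, 1/4), the bounds −√(2 log(1/u)) ≤ G^{−1}(u) ≤ −(1/2)√(log(1/u)) hold, where G is the standard normal CDF. -/
/-!
Since `G` is continuous and strictly increasing, `G⁻¹(u)` is the unique solution of `G(t) = u`,
so with `L = log (1/u) > 1` it suffices to show `G(-√(2L)) ≤ u ≤ G(-√L/2)`.

The first inequality is the tail bound `G(-x) ≤ ∫ₓ^∞ s e^{-s²/2} ds = e^{-x²/2}` for `x ≥ 1`.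
For the second, put `y = √L/2`, so that `u = e^{-4y²}`. For `y ≥ 0.95` the density dominates
`8 s e^{-4s²}`, whose tail integral is `e^{-4y²}`. For smaller `y` we use the alternating Taylor
bound `e^{-t} ≤ 1 - t + t²/2`, which gives `G(-c) ≥ 1/2 - (c - c³/6 + c⁵/40)/√(2π)`: evaluated
at `c = 0.95` it handles `0.67 ≤ y ≤ 0.95`, and at `c = 0.67` it gives `G(-y) ≥ 1/4 > u`.
-/

open MeasureTheory

noncomputable def stdGaussCDF (u : ℝ) : ℝ :=
  ∫ s in Set.Iic u, Real.exp (-s ^ 2 / 2) / Real.sqrt (2 * Real.pi)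

open Real Set Filter Topology

noncomputable def gaussPDF (s : ℝ) : ℝ := exp (-s ^ 2 / 2) / √(2 * π)

lemma gaussPDF_pos (s : ℝ) : 0 < gaussPDF s := by
  unfold gaussPDF; positivity

lemma gaussPDF_neg (s : ℝ) : gaussPDF (-s) = gaussPDF s := by
  simp [gaussPDF]

lemma integrable_gaussPDF : Integrable gaussPDF := by
  refine ((integrable_exp_neg_mul_sq (by norm_num : (0 : ℝ) < 1 / 2)).div_const
    (√(2 * π))).congr ?_
  filter_upwards with s
  simp only [gaussPDF]
  ring_nf

lemma sqrt_two_mul_pi_gt : 2.5 < √(2 * π) :=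
  (Real.lt_sqrt (by norm_num)).2 (by linarith [pi_gt_d2])

lemma sqrt_two_mul_pi_lt : √(2 * π) < 2.51 :=
  (Real.sqrt_lt' (by norm_num)).2 (by linarith [pi_lt_d2])

lemma stdGaussCDF_sub (a b : ℝ) : stdGaussCDF b - stdGaussCDF a = ∫ s in a..b, gaussPDF s :=
  intervalIntegral.integral_Iic_sub_Iic integrable_gaussPDF.integrableOn
    integrable_gaussPDF.integrableOn

lemma stdGaussCDF_strictMono : StrictMono stdGaussCDF := fun a b hab => by
  have := intervalIntegral.intervalIntegral_pos_of_pos integrable_gaussPDF.intervalIntegrable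
    gaussPDF_pos hab
  linarith [stdGaussCDF_sub a b]

lemma continuous_stdGaussCDF : Continuous stdGaussCDF := by
  have h : stdGaussCDF = fun b => stdGaussCDF 0 + ∫ s in (0 : ℝ)..b, gaussPDF s := by
    funext b
    linarith [stdGaussCDF_sub 0 b]
  rw [h]
  exact continuous_const.add (integrable_gaussPDF.continuous_primitive 0)

lemma stdGaussCDF_neg (c : ℝ) : stdGaussCDF (-c) = ∫ s in Ioi c, gaussPDF s :=
  calc stdGaussCDF (-c) = ∫ s in Iic (-c), gaussPDF s := rfl
    _ = ∫ s in Ioi c, gaussPDF (-s) := (integral_comp_neg_Ioi c gaussPDF).symm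
    _ = ∫ s in Ioi c, gaussPDF s := by simp only [gaussPDF_neg]

lemma stdGaussCDF_zero : stdGaussCDF 0 = 1 / 2 := by
  have h := integral_gaussian_Ioi (1 / 2)
  rw [show π / (1 / 2) = 2 * π by ring] at h
  rw [← neg_zero, stdGaussCDF_neg]
  calc ∫ s in Ioi (0 : ℝ), gaussPDF s
      = (∫ s in Ioi (0 : ℝ), exp (-(1 / 2) * s ^ 2)) / √(2 * π) := by
        rw [← integral_div]
        congr with s
        simp only [gaussPDF]
        ring_nf
    _ = 1 / 2 := by
        rw [h]
        field_simp

lemma stdGaussCDF_neg_eq_half_sub (c : ℝ) :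
    stdGaussCDF (-c) = 1 / 2 - ∫ s in (0 : ℝ)..c, gaussPDF s := by
  have h := intervalIntegral.integral_comp_neg (a := -c) (b := 0) gaussPDF
  simp only [gaussPDF_neg, neg_neg, neg_zero] at h
  linarith [stdGaussCDF_sub (-c) 0, stdGaussCDF_zero]

lemma exp_neg_le_of_one_le_mul_sum {t Q : ℝ} (ht : 0 ≤ t) {n : ℕ}
    (h : 1 ≤ Q * ∑ i ∈ Finset.range n, t ^ i / i.factorial) : exp (-t) ≤ Q := by
  have hS : 0 < ∑ i ∈ Finset.range n, t ^ i / i.factorial := by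
    refine (Finset.sum_nonneg fun i _ => by positivity).lt_of_ne fun h0 => ?_
    rw [← h0, mul_zero] at h
    norm_num at h
  calc exp (-t) = (exp t)⁻¹ := exp_neg t
    _ ≤ (∑ i ∈ Finset.range n, t ^ i / i.factorial)⁻¹ :=
        inv_anti₀ hS (sum_le_exp_of_nonneg ht n)
    _ ≤ Q := (inv_le_iff_one_le_mul₀ hS).2 h

lemma exp_neg_le_one_sub_add_sq_div_two {t : ℝ} (ht : 0 ≤ t) : exp (-t) ≤ 1 - t + t ^ 2 / 2 :=
  exp_neg_le_of_one_le_mul_sum ht (n := 4) <| by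
    simp only [Finset.sum_range_succ, Finset.sum_range_zero, Nat.factorial]
    push_cast
    nlinarith [pow_nonneg ht 3, pow_nonneg ht 4, pow_nonneg ht 5]

lemma gaussPDF_le (s : ℝ) : gaussPDF s ≤ (1 - s ^ 2 / 2 + s ^ 4 / 8) / √(2 * π) := by
  have h := exp_neg_le_one_sub_add_sq_div_two (by positivity : 0 ≤ s ^ 2 / 2)
  unfold gaussPDF
  gcongr
  rw [neg_div]
  exact h.trans_eq (by ring)

lemma half_sub_le_stdGaussCDF_neg {c : ℝ} (hc : 0 ≤ c) :
    1 / 2 - (c - c ^ 3 / 6 + c ^ 5 / 40) / √(2 * π) ≤ stdGaussCDF (-c) := by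
  have hderiv (s : ℝ) :
      HasDerivAt (fun s => s - s ^ 3 / 6 + s ^ 5 / 40) (1 - s ^ 2 / 2 + s ^ 4 / 8) s :=
    (((hasDerivAt_id s).sub ((hasDerivAt_pow 3 s).div_const 6)).add
      ((hasDerivAt_pow 5 s).div_const 40)).congr_deriv (by norm_num; ring)
  have hpoly : ∫ s in (0 : ℝ)..c, (1 - s ^ 2 / 2 + s ^ 4 / 8) = c - c ^ 3 / 6 + c ^ 5 / 40 := by
    rw [intervalIntegral.integral_eq_sub_of_hasDerivAt (fun s _ => hderiv s)
      (by apply Continuous.intervalIntegrable; fun_prop)]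
    ring
  rw [stdGaussCDF_neg_eq_half_sub, ← hpoly, ← intervalIntegral.integral_div]
  gcongr 1 / 2 - ?_
  exact intervalIntegral.integral_mono_on hc integrable_gaussPDF.intervalIntegrable
    (by apply Continuous.intervalIntegrable; fun_prop) fun s _ => gaussPDF_le s

lemma integral_Ioi_mul_exp_neg_mul_sq {a : ℝ} (ha : 0 < a) (y : ℝ) :
    ∫ s in Ioi y, s * exp (-a * s ^ 2) = exp (-a * y ^ 2) / (2 * a) := by
  have hderiv (s : ℝ) :
      HasDerivAt (fun s => -exp (-a * s ^ 2) / (2 * a)) (s * exp (-a * s ^ 2)) s :=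
    (((hasDerivAt_pow 2 s).const_mul (-a)).exp.neg.div_const (2 * a)).congr_deriv
      (by field_simp; ring)
  have hlim : Tendsto (fun s => -exp (-a * s ^ 2) / (2 * a)) atTop (𝓝 0) := by
    simpa using (tendsto_exp_atBot.comp ((tendsto_pow_atTop two_ne_zero).const_mul_atTop_of_neg
      (neg_neg_of_pos ha))).neg.div_const (2 * a)
  rw [integral_Ioi_of_hasDerivAt_of_tendsto' (fun s _ => hderiv s)
    (integrable_mul_exp_neg_mul_sq ha).integrableOn hlim]
  ring

lemma stdGaussCDF_neg_le_exp {x : ℝ} (hx : 1 ≤ x) : stdGaussCDF (-x) ≤ exp (-x ^ 2 / 2) := by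
  have hbound : ∀ s ∈ Ioi x, gaussPDF s ≤ s * exp (-(1 / 2) * s ^ 2) := fun s hs => by
    have hs : 1 ≤ s := hx.trans hs.le
    calc gaussPDF s ≤ exp (-s ^ 2 / 2) :=
          div_le_self (exp_pos _).le (by linarith [sqrt_two_mul_pi_gt])
      _ ≤ s * exp (-s ^ 2 / 2) := le_mul_of_one_le_left (exp_pos _).le hs
      _ = s * exp (-(1 / 2) * s ^ 2) := by ring_nf
  calc stdGaussCDF (-x) ≤ ∫ s in Ioi x, s * exp (-(1 / 2) * s ^ 2) := by
        rw [stdGaussCDF_neg]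
        exact setIntegral_mono_on integrable_gaussPDF.integrableOn
          (integrable_mul_exp_neg_mul_sq (by norm_num)).integrableOn measurableSet_Ioi hbound
    _ = exp (-x ^ 2 / 2) := by
        rw [integral_Ioi_mul_exp_neg_mul_sq (by norm_num)]
        ring_nf

lemma mul_exp_neg_four_mul_sq_le_gaussPDF {s : ℝ} (hs : 0.95 ≤ s) :
    8 * (s * exp (-4 * s ^ 2)) ≤ gaussPDF s := by
  have hexp : 21 ≤ exp (7 * 0.95 ^ 2 / 2) :=
    (by norm_num [Finset.sum_range_succ, Nat.factorial] :
      (21 : ℝ) ≤ ∑ i ∈ Finset.range 6, (7 * 0.95 ^ 2 / 2 : ℝ) ^ i / i.factorial).trans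
      (sum_le_exp_of_nonneg (by norm_num) 6)
  have hgrowth : 8 * s * √(2 * π) ≤ exp (7 * s ^ 2 / 2) :=
    calc 8 * s * √(2 * π) ≤ 21 * (7 * s ^ 2 / 2 - 7 * 0.95 ^ 2 / 2 + 1) := by
          nlinarith [sqrt_two_mul_pi_lt]
      _ ≤ exp (7 * 0.95 ^ 2 / 2) * exp (7 * s ^ 2 / 2 - 7 * 0.95 ^ 2 / 2) :=
          mul_le_mul hexp (add_one_le_exp _) (by nlinarith) (exp_pos _).le
      _ = exp (7 * s ^ 2 / 2) := by rw [← exp_add]; ring_nf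
  have hsplit : exp (-s ^ 2 / 2) = exp (7 * s ^ 2 / 2) * exp (-4 * s ^ 2) := by
    rw [← exp_add]; ring_nf
  rw [gaussPDF, le_div_iff₀ (by positivity), hsplit]
  nlinarith [exp_pos (-4 * s ^ 2)]

lemma exp_neg_four_mul_sq_le_stdGaussCDF_neg {y : ℝ} (hy : 0.67 ≤ y) :
    exp (-4 * y ^ 2) ≤ stdGaussCDF (-y) := by
  rcases le_total 0.95 y with hfar | hnear
  · calc exp (-4 * y ^ 2) = ∫ s in Ioi y, 8 * (s * exp (-4 * s ^ 2)) := by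
          rw [integral_const_mul, integral_Ioi_mul_exp_neg_mul_sq (by norm_num)]
          ring
      _ ≤ stdGaussCDF (-y) := by
          rw [stdGaussCDF_neg]
          exact setIntegral_mono_on
            ((integrable_mul_exp_neg_mul_sq (by norm_num)).const_mul 8).integrableOn
            integrable_gaussPDF.integrableOn measurableSet_Ioi
            fun s hs => mul_exp_neg_four_mul_sq_le_gaussPDF (hfar.trans hs.le)
  · calc exp (-4 * y ^ 2) ≤ exp (-(4 * 0.67 ^ 2)) := exp_le_exp.2 (by nlinarith)
      _ ≤ 0.169 := exp_neg_le_of_one_le_mul_sum (n := 6) (by norm_num)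
          (by norm_num [Finset.sum_range_succ, Nat.factorial])
      _ ≤ 1 / 2 - (0.95 - 0.95 ^ 3 / 6 + 0.95 ^ 5 / 40) / √(2 * π) := by
          rw [le_sub_comm, div_le_iff₀ (by positivity)]
          nlinarith [sqrt_two_mul_pi_gt]
      _ ≤ stdGaussCDF (-0.95) := half_sub_le_stdGaussCDF_neg (by norm_num)
      _ ≤ stdGaussCDF (-y) := stdGaussCDF_strictMono.monotone (by linarith)

lemma quarter_le_stdGaussCDF_neg : 1 / 4 ≤ stdGaussCDF (-0.67) := by
  refine le_trans ?_ (half_sub_le_stdGaussCDF_neg (by norm_num))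
  rw [le_sub_comm, div_le_iff₀ (by positivity)]
  nlinarith [sqrt_two_mul_pi_gt]

lemma StrictMono.invFun_mem_Icc {α β : Type*} [ConditionallyCompleteLinearOrder α]
    [DenselyOrdered α] [TopologicalSpace α] [OrderTopology α] [Nonempty α]
    [LinearOrder β] [TopologicalSpace β] [OrderClosedTopology β] {f : α → β}
    (hf : StrictMono f) (hc : Continuous f) {a b : α} {u : β} (ha : f a ≤ u) (hb : u ≤ f b) :
    Function.invFun f u ∈ Icc a b := by
  obtain ⟨t, -, ht⟩ :=
    intermediate_value_Icc (hf.le_iff_le.1 (ha.trans hb)) hc.continuousOn ⟨ha, hb⟩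
  have hinv : f (Function.invFun f u) = u := Function.invFun_eq ⟨t, ht⟩
  rw [← hinv] at ha hb
  exact ⟨hf.le_iff_le.1 ha, hf.le_iff_le.1 hb⟩

/-- For all `u ∈ (0, 1/4)`, `−√(2 log(1/u)) ≤ G⁻¹(u) ≤ −(1/2)√(log(1/u))` where `G`
is the standard normal CDF. -/
theorem gauss_quantile_bounds (u : ℝ) (hu0 : 0 < u) (hu : u < 1 / 4) :
    -Real.sqrt (2 * Real.log (1 / u)) ≤ Function.invFun stdGaussCDF u ∧
    Function.invFun stdGaussCDF u ≤ -(1 / 2) * Real.sqrt (Real.log (1 / u)) := by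
  set L := log (1 / u)
  have hL : 1 ≤ L := (le_log_iff_exp_le (by positivity)).2 <|
    calc exp 1 ≤ 4 := by linarith [exp_one_lt_d9]
      _ ≤ 1 / u := by rw [le_div_iff₀ hu0]; linarith
  have hexpL : exp (-L) = u := by
    simp [L, exp_log hu0]
  have hx : stdGaussCDF (-√(2 * L)) ≤ u := by
    refine (stdGaussCDF_neg_le_exp (one_le_sqrt.2 (by linarith))).trans_eq ?_
    rw [sq_sqrt (by positivity), ← hexpL]
    ring_nf
  have hy : u ≤ stdGaussCDF (-(√L / 2)) := by
    rcases le_total (√L / 2) 0.67 with hsmall | hlarge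
    · exact hu.le.trans (quarter_le_stdGaussCDF_neg.trans
        (stdGaussCDF_strictMono.monotone (neg_le_neg hsmall)))
    · refine le_trans (le_of_eq ?_) (exp_neg_four_mul_sq_le_stdGaussCDF_neg hlarge)
      rw [div_pow, sq_sqrt (by positivity), ← hexpL]
      ring_nf
  obtain ⟨hlower, hupper⟩ := stdGaussCDF_strictMono.invFun_mem_Icc continuous_stdGaussCDF hx hy
  exact ⟨hlower, hupper.trans_eq (by ring)⟩
end
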